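/- For every finite graph G and integer r ≥ 0, bn_r(G) ≤ 2 · link_{3r+1}(G); in fact, any minimum-size hitting set S of a depth-r bramble of G is depth-(3r+1) ⌈|S|/2⌉-linked. -/

import Mathlib

open SimpleGraph

variable {V : Type*}

/-- `B` induces a connected subgraph of `G`. -/
def ConnSet (G : SimpleGraph V) (B : Set V) : Prop := (G.induce B).Connected

/-- `B` induces a subgraph of `G` of radius at most `r`. -/
def RadiusLE (G : SimpleGraph V) (B : Set V) (r : ℕ) : Prop :=
  ∃ u : B, ∀ v : B, (G.induce B).dist u v ≤ r

/-- Two vertex sets touch: they share a vertex or are joined by an edge. -/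
def Touch (G : SimpleGraph V) (A B : Set V) : Prop :=
  (A ∩ B).Nonempty ∨ ∃ a ∈ A, ∃ b ∈ B, G.Adj a b

/-- A depth-`r` bramble. -/
def IsBramble (G : SimpleGraph V) (r : ℕ) (𝓑 : Finset (Set V)) : Prop :=
  (∀ B ∈ 𝓑, ConnSet G B ∧ RadiusLE G B r) ∧ ∀ B ∈ 𝓑, ∀ C ∈ 𝓑, Touch G B C

/-- A bramble with no bound on the radius of its elements. -/
def IsBrambleND (G : SimpleGraph V) (𝓑 : Finset (Set V)) : Prop :=
  (∀ B ∈ 𝓑, ConnSet G B) ∧ ∀ B ∈ 𝓑, ∀ C ∈ 𝓑, Touch G B C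

def IsHittingSet (𝓑 : Finset (Set V)) (X : Finset V) : Prop :=
  ∀ B ∈ 𝓑, ∃ x ∈ X, x ∈ B

/-- The order of a bramble: minimum size of a hitting set. -/
noncomputable def brambleOrder (𝓑 : Finset (Set V)) : ℕ :=
  sInf {n | ∃ X : Finset V, X.card = n ∧ IsHittingSet 𝓑 X}

/-- The depth-`r` bramble number. -/
noncomputable def bn (G : SimpleGraph V) (r : ℕ) : ℕ :=
  sSup {n | ∃ 𝓑 : Finset (Set V), IsBramble G r 𝓑 ∧ brambleOrder 𝓑 = n}

/-- A depth-`r` `t`-bramble: any `t` (not necessarily distinct) elements intersect. -/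
def IsTBramble (G : SimpleGraph V) (r t : ℕ) (𝓑 : Finset (Set V)) : Prop :=
  IsBramble G r 𝓑 ∧ ∀ f : Fin t → Set V, (∀ i, f i ∈ 𝓑) → (⋂ i, f i).Nonempty

/-- The depth-`r` `t`-bramble number. -/
noncomputable def bnT (G : SimpleGraph V) (r t : ℕ) : ℕ :=
  sSup {n | ∃ 𝓑 : Finset (Set V), IsTBramble G r t 𝓑 ∧ brambleOrder 𝓑 = n}

/-- A depth-`r` tangle. -/
def IsTangle (G : SimpleGraph V) (r : ℕ) (𝓑 : Finset (Set V)) : Prop :=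
  IsBramble G r 𝓑 ∧ ∀ T₁ ∈ 𝓑, ∀ T₂ ∈ 𝓑, ∀ T₃ ∈ 𝓑,
    (T₁ ∩ T₂ ∩ T₃).Nonempty ∨
      ∃ a b : V, G.Adj a b ∧ (a ∈ T₁ ∨ b ∈ T₁) ∧ (a ∈ T₂ ∨ b ∈ T₂) ∧ (a ∈ T₃ ∨ b ∈ T₃)

/-- The depth-`r` tangle number. -/
noncomputable def tn (G : SimpleGraph V) (r : ℕ) : ℕ :=
  sSup {n | ∃ 𝓑 : Finset (Set V), IsTangle G r 𝓑 ∧ brambleOrder 𝓑 = n}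

/-- The set of vertices strongly `k`-reachable from `v` w.r.t. the linear order
given by the embedding `π : V ↪ ℕ`. -/
def SReach (G : SimpleGraph V) (π : V ↪ ℕ) (k : ℕ) (v : V) : Set V :=
  {u | π u ≤ π v ∧ ∃ p : G.Walk v u, p.IsPath ∧ p.length ≤ k ∧
    ∀ w ∈ p.support, w ≠ v → w ≠ u → π v < π w}

/-- The strong `k`-coloring number. -/
noncomputable def scol (G : SimpleGraph V) (k : ℕ) : ℕ :=
  sInf {n | ∃ π : V ↪ ℕ, ∀ v : V, (SReach G π k v).ncard ≤ n}

/-- A depth-`r` minor-model of `H` in `G`. -/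
def IsMinorModel {W : Type*} (G : SimpleGraph V) (H : SimpleGraph W) (r : ℕ)
    (M : W → Set V) : Prop :=
  (∀ w, ConnSet G (M w) ∧ RadiusLE G (M w) r) ∧
  (Pairwise fun w w' => Disjoint (M w) (M w')) ∧
  ∀ ⦃w w'⦄, H.Adj w w' → ∃ a ∈ M w, ∃ b ∈ M w', G.Adj a b

/-- `ω_r(G)`: the largest `t` such that `K_t` is a depth-`r` minor of `G`. -/
noncomputable def cliqueMinorNum (G : SimpleGraph V) (r : ℕ) : ℕ :=
  sSup {t | ∃ M : Fin t → Set V, IsMinorModel G (⊤ : SimpleGraph (Fin t)) r M}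

/-- `grid_r(G)`: the largest `t` such that the `t × t` grid is a depth-`r` minor of `G`. -/
noncomputable def gridMinorNum (G : SimpleGraph V) (r : ℕ) : ℕ :=
  sSup {t | ∃ M : Fin t × Fin t → Set V,
    IsMinorModel G (SimpleGraph.pathGraph t □ SimpleGraph.pathGraph t) r M}

/-- `S` is depth-`r` `k`-linked. -/
def IsLinkedSet (G : SimpleGraph V) (r k : ℕ) (S : Set V) : Prop :=
  ∀ X : Finset V, X.card < k →
    ∃ B : Set V, (∀ x ∈ X, x ∉ B) ∧ ConnSet G B ∧ RadiusLE G B r ∧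
      S.ncard < 2 * (S ∩ B).ncard

/-- The depth-`r` linkedness of `G`. -/
noncomputable def linkNum (G : SimpleGraph V) (r : ℕ) : ℕ :=
  sSup {k | ∃ S : Set V, IsLinkedSet G r k S}

/-- `S` is depth-`r` well-linked. -/
def IsWellLinkedSet (G : SimpleGraph V) (r : ℕ) (S : Set V) : Prop :=
  ∀ A B : Finset V, ↑A ⊆ S → ↑B ⊆ S → A.card = B.card →
    ∀ Y : Finset V, Y.card < A.card →
      ∃ (a b : V) (p : G.Walk a b), a ∈ A ∧ b ∈ B ∧ p.IsPath ∧ p.length ≤ r ∧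
        ∀ w ∈ p.support, w ∉ Y

/-- The depth-`r` well-linkedness of `G`. -/
noncomputable def wellNum (G : SimpleGraph V) (r : ℕ) : ℕ :=
  sSup {n | ∃ S : Set V, IsWellLinkedSet G r S ∧ S.ncard = n}

/-!
Let `X` be a minimum hitting set of a depth-`r` bramble `𝓑` and let `Z` have fewer than
`|X| / 2` vertices. Then `Z` is too small to hit `𝓑`, so some `B₀ ∈ 𝓑` avoids `Z`; let `U` be the
union of all members of `𝓑` avoiding `Z`. Every such member touches `B₀`, so from the centre of
`B₀` every vertex of `U` is reached in `r + 1 + r + r` steps inside `U`. Since `(X ∩ U) ∪ Z` hits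
`𝓑`, minimality of `X` gives `|X| ≤ |X ∩ U| + |Z| < |X ∩ U| + |X| / 2`, so `U` contains more than
half of `X`.
-/

theorem SimpleGraph.Hom.edist_le {W : Type*} {G : SimpleGraph V} {H : SimpleGraph W}
    (f : G →g H) (u v : V) : H.edist (f u) (f v) ≤ G.edist u v := by
  by_cases huv : G.Reachable u v
  · obtain ⟨p, hp⟩ := huv.exists_walk_length_eq_edist
    simpa [hp] using SimpleGraph.edist_le (p.map f)
  · simp [edist_eq_top_of_not_reachable huv]

section Induced

variable {G : SimpleGraph V}

theorem edist_induce_le_of_subset {A U : Set V} (hAU : A ⊆ U) {x y : V} (hx : x ∈ A)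
    (hy : y ∈ A) :
    (G.induce U).edist ⟨x, hAU hx⟩ ⟨y, hAU hy⟩ ≤ (G.induce A).edist ⟨x, hx⟩ ⟨y, hy⟩ :=
  (induceHom Hom.id hAU).edist_le _ _

theorem connSet_and_radiusLE_iff {B : Set V} {r : ℕ} :
    ConnSet G B ∧ RadiusLE G B r ↔ ∃ u : B, ∀ v : B, (G.induce B).edist u v ≤ r := by
  constructor
  · rintro ⟨hconn, u, hu⟩
    refine ⟨u, fun v => ?_⟩
    rw [← (hconn.preconnected u v).coe_dist_eq_edist]
    exact_mod_cast hu v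
  · rintro ⟨u, hu⟩
    have hreach (v : B) : (G.induce B).Reachable u v :=
      reachable_of_edist_ne_top (ne_top_of_le_ne_top (ENat.natCast_ne_top r) (hu v))
    refine ⟨(connected_iff _).2 ⟨fun v w => (hreach v).symm.trans (hreach w), ⟨u⟩⟩,
      u, fun v => ?_⟩
    have := hu v
    rw [← (hreach v).coe_dist_eq_edist] at this
    exact_mod_cast this

theorem Touch.exists_adj_or_eq {A B : Set V} (h : Touch G A B) :
    ∃ a ∈ A, ∃ b ∈ B, G.Adj a b ∨ a = b := by
  rcases h with ⟨c, hcA, hcB⟩ | ⟨a, ha, b, hb, hab⟩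
  exacts [⟨c, hcA, c, hcB, .inr rfl⟩, ⟨a, ha, b, hb, .inl hab⟩]

theorem connSet_and_radiusLE_sUnion_of_touch {𝓕 : Set (Set V)} {B₀ : Set V} {r : ℕ}
    (hB₀ : B₀ ∈ 𝓕) (h𝓕 : ∀ B ∈ 𝓕, ConnSet G B ∧ RadiusLE G B r)
    (htouch : ∀ B ∈ 𝓕, Touch G B₀ B) :
    ConnSet G (⋃₀ 𝓕) ∧ RadiusLE G (⋃₀ 𝓕) (3 * r + 1) := by
  have hsub (B) (hB : B ∈ 𝓕) : B ⊆ ⋃₀ 𝓕 := Set.subset_sUnion_of_mem hB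
  obtain ⟨⟨u, hu⟩, hu₀⟩ := connSet_and_radiusLE_iff.1 (h𝓕 B₀ hB₀)
  refine connSet_and_radiusLE_iff.2 ⟨⟨u, hsub B₀ hB₀ hu⟩, ?_⟩
  rintro ⟨v, B, hB, hv⟩
  obtain ⟨⟨w, hw⟩, hw₀⟩ := connSet_and_radiusLE_iff.1 (h𝓕 B hB)
  obtain ⟨a, ha, b, hb, hab⟩ := (htouch B hB).exists_adj_or_eq
  set d := (G.induce (⋃₀ 𝓕)).edist
  have hua := (edist_induce_le_of_subset (hsub B₀ hB₀) hu ha).trans (hu₀ ⟨a, ha⟩)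
  have hab : d ⟨a, hsub B₀ hB₀ ha⟩ ⟨b, hsub B hB hb⟩ ≤ 1 :=
    edist_le_one_iff_adj_or_eq.2 (hab.imp id Subtype.ext)
  have hbw := (edist_induce_le_of_subset (hsub B hB) hb hw).trans
    (edist_comm.trans_le (hw₀ ⟨b, hb⟩))
  have hwv := (edist_induce_le_of_subset (hsub B hB) hw hv).trans (hw₀ ⟨v, hv⟩)
  calc d _ _
      ≤ d _ ⟨a, hsub B₀ hB₀ ha⟩ + (d _ ⟨b, hsub B hB hb⟩ + (d _ ⟨w, hsub B hB hw⟩ + d _ _)) :=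
        SimpleGraph.edist_triangle.trans <| add_le_add_right
          (SimpleGraph.edist_triangle.trans <| add_le_add_right SimpleGraph.edist_triangle _) _
    _ ≤ r + (1 + (r + r)) := add_le_add hua (add_le_add hab (add_le_add hbw hwv))
    _ = ↑(3 * r + 1) := by push_cast; ring

theorem ConnSet.nonempty {B : Set V} (h : ConnSet G B) : B.Nonempty :=
  Set.nonempty_coe_sort.1 (Connected.nonempty h)

end Induced

section Linked

variable {G : SimpleGraph V} {r k : ℕ} {S : Set V}

theorem IsLinkedSet.le_card [Fintype V] (h : IsLinkedSet G r k S) : k ≤ Fintype.card V := by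
  by_contra! hk
  obtain ⟨B, hBX, hB, -, -⟩ := h Finset.univ (by simpa using hk)
  obtain ⟨b, hb⟩ := hB.nonempty
  exact hBX b (Finset.mem_univ b) hb

theorem IsLinkedSet.le_linkNum [Fintype V] (h : IsLinkedSet G r k S) : k ≤ linkNum G r :=
  le_csSup ⟨Fintype.card V, fun _ ⟨_, h'⟩ => h'.le_card⟩ ⟨S, h⟩

end Linked

section Hitting

variable {𝓑 : Finset (Set V)} {X : Finset V}

theorem brambleOrder_le_card (hX : IsHittingSet 𝓑 X) : brambleOrder 𝓑 ≤ X.card :=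
  Nat.sInf_le ⟨X, rfl, hX⟩

theorem exists_isHittingSet_card_eq_brambleOrder (h𝓑 : ∀ B ∈ 𝓑, B.Nonempty) :
    ∃ X : Finset V, IsHittingSet 𝓑 X ∧ X.card = brambleOrder 𝓑 := by
  classical
  have hne : {n | ∃ X : Finset V, X.card = n ∧ IsHittingSet 𝓑 X}.Nonempty :=
    ⟨_, 𝓑.attach.image (fun B => (h𝓑 B.1 B.2).some), rfl, fun B hB =>
      ⟨_, Finset.mem_image_of_mem _ (Finset.mem_attach _ ⟨B, hB⟩), (h𝓑 B hB).some_mem⟩⟩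
  obtain ⟨X, hX, hXhit⟩ := Nat.sInf_mem hne
  exact ⟨X, hXhit, hX⟩

theorem IsHittingSet.filter_union [DecidableEq V] {U : Set V} [DecidablePred (· ∈ U)]
    (hX : IsHittingSet 𝓑 X) (Z : Finset V) (hU : ∀ B ∈ 𝓑, (∀ z ∈ Z, z ∉ B) → B ⊆ U) :
    IsHittingSet 𝓑 ({x ∈ X | x ∈ U} ∪ Z) := by
  intro B hB
  by_cases hZB : ∃ z ∈ Z, z ∈ B
  · obtain ⟨z, hz, hzB⟩ := hZB
    exact ⟨z, Finset.mem_union_right _ hz, hzB⟩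
  · obtain ⟨x, hx, hxB⟩ := hX B hB
    have hBU := hU B hB fun z hz hzB => hZB ⟨z, hz, hzB⟩
    exact ⟨x, Finset.mem_union_left _ (Finset.mem_filter.2 ⟨hx, hBU hxB⟩), hxB⟩

theorem IsBramble.isLinkedSet_of_isHittingSet {G : SimpleGraph V} {r : ℕ}
    (h𝓑 : IsBramble G r 𝓑) (hX : IsHittingSet 𝓑 X) (hmin : X.card = brambleOrder 𝓑) :
    IsLinkedSet G (3 * r + 1) ((X.card + 1) / 2) X := by
  classical
  intro Z hZ
  obtain ⟨B₀, hB₀, hB₀Z⟩ : ∃ B₀ ∈ 𝓑, ∀ z ∈ Z, z ∉ B₀ := by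
    by_contra! hZhit
    have hcard := brambleOrder_le_card hZhit
    omega
  set 𝓕 : Set (Set V) := {B | B ∈ 𝓑 ∧ ∀ z ∈ Z, z ∉ B}
  obtain ⟨hconn, hrad⟩ := connSet_and_radiusLE_sUnion_of_touch (𝓕 := 𝓕) ⟨hB₀, hB₀Z⟩
    (fun B hB => h𝓑.1 B hB.1) (fun B hB => h𝓑.2 B₀ hB₀ B hB.1)
  refine ⟨⋃₀ 𝓕, fun z hz ⟨B, hB, hzB⟩ => hB.2 z hz hzB, hconn, hrad, ?_⟩
  have hcover := hX.filter_union (U := ⋃₀ 𝓕) Z fun B hB hBZ =>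
    Set.subset_sUnion_of_mem ⟨hB, hBZ⟩
  have hcard := (brambleOrder_le_card hcover).trans (Finset.card_union_le _ _)
  have hXU : (↑X ∩ ⋃₀ 𝓕 : Set V) = ↑{x ∈ X | x ∈ ⋃₀ 𝓕} := by ext; simp
  rw [Set.ncard_coe_finset, hXU, Set.ncard_coe_finset]
  omega

end Hitting

/-- `bn_r(G) ≤ 2 · link_{3r+1}(G)`; in fact, any minimum-size hitting set `X`
of a depth-`r` bramble is depth-`(3r+1)` `⌈|X|/2⌉`-linked. -/
theorem bn_le_two_mul_linkNum {V : Type*} [Fintype V] (G : SimpleGraph V) (r : ℕ) :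
    bn G r ≤ 2 * linkNum G (3 * r + 1) ∧
    ∀ (𝓑 : Finset (Set V)) (X : Finset V), IsBramble G r 𝓑 → IsHittingSet 𝓑 X →
      X.card = brambleOrder 𝓑 → IsLinkedSet G (3 * r + 1) ((X.card + 1) / 2) (↑X : Set V) := by
  refine ⟨csSup_le' ?_, fun 𝓑 X h𝓑 hX hmin => h𝓑.isLinkedSet_of_isHittingSet hX hmin⟩
  rintro _ ⟨𝓑, h𝓑, rfl⟩
  obtain ⟨X, hX, hmin⟩ :=
    exists_isHittingSet_card_eq_brambleOrder fun B hB => (h𝓑.1 B hB).1.nonempty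
  have hlink := (h𝓑.isLinkedSet_of_isHittingSet hX hmin).le_linkNum
  omega
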